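/- arXiv:1310.6931 — 4 statements merged into one kernel-verified Lean document; each statement's English description precedes it below -/
import Mathlib

section
/- Let κ, τ : ℝ → ℝ be differentiable with κ(s) > 0, and let a₁, a₂, a₃ : ℝ → ℝ satisfy a₁' = a₂κ, a₂' = −a₁κ + a₃τ, a₃' = −a₂τ with a₂ ≡ cos θ a nonzero constant. If additionally a₁² + a₂² + a₃² is constant and a₃ is nowhere zero, then a₁ = (τ/κ)·a₃, and there is a nonzero constant n with a₃ = n·κ/√(κ² + τ²) and a₁ = n·τ/√(κ² + τ²). -/
/-!
Since `a₂` is constant, the second Frenet equation forces `a₁ κ = a₃ τ`. Together with the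
constancy of `a₁² + a₃²` this makes the continuous function `a₃ √(κ² + τ²) / κ` square to a
constant; as it never vanishes, connectedness of `ℝ` makes it a constant `n`, and both formulas
follow by solving for `a₃` and then `a₁`.
-/

open Real

theorem eq_of_continuous_of_sq_eq_const {X 𝕜 : Type*} [TopologicalSpace X] [PreconnectedSpace X]
    [Field 𝕜] [TopologicalSpace 𝕜] [T1Space 𝕜] [ContinuousInv₀ 𝕜] [ContinuousMul 𝕜]
    {g : X → 𝕜} {c : 𝕜} (hg : Continuous g) (hsq : ∀ x, g x ^ 2 = c) (hne : ∀ x, g x ≠ 0)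
    (x y : X) : g x = g y :=
  isPreconnected_univ.eq_of_sq_eq (g := fun _ => g y) hg.continuousOn continuousOn_const
    (fun z _ => by simp only [Pi.pow_apply, hsq]) (fun _ => hne y) (Set.mem_univ y) rfl
    (Set.mem_univ x)

section Pointwise

variable {a₁ a₃ κ τ : ℝ}

theorem sq_mul_sqrt_div_eq_sq_add_sq_of_mul_eq (hκ : κ ≠ 0) (h : a₁ * κ = a₃ * τ) :
    (a₃ * √(κ ^ 2 + τ ^ 2) / κ) ^ 2 = a₁ ^ 2 + a₃ ^ 2 := by
  rw [div_pow, mul_pow, sq_sqrt (by positivity), div_eq_iff (pow_ne_zero 2 hκ)]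
  linear_combination -(a₁ * κ + a₃ * τ) * h

theorem eq_mul_div_sqrt_of_mul_sqrt_div_eq {n : ℝ} (hκ : κ ≠ 0) (h : a₁ * κ = a₃ * τ)
    (hn : a₃ * √(κ ^ 2 + τ ^ 2) / κ = n) :
    a₃ = n * κ / √(κ ^ 2 + τ ^ 2) ∧ a₁ = n * τ / √(κ ^ 2 + τ ^ 2) := by
  have hρ : √(κ ^ 2 + τ ^ 2) ≠ 0 := (sqrt_pos.2 (by positivity)).ne'
  subst hn
  exact ⟨by field_simp, by field_simp; exact h⟩

end Pointwise

theorem stmt_5_general (κ τ a₁ a₂ a₃ : ℝ → ℝ) (θ : ℝ)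
    (hκ : Differentiable ℝ κ) (hτ : Differentiable ℝ τ)
    (hκpos : ∀ s, 0 < κ s)
    (ha₃d : Differentiable ℝ a₃)
    (h2 : ∀ s, deriv a₂ s = -(a₁ s * κ s) + a₃ s * τ s)
    (ha₂ : ∀ s, a₂ s = Real.cos θ)
    (hnorm : ∃ C, ∀ s, a₁ s ^ 2 + a₂ s ^ 2 + a₃ s ^ 2 = C)
    (ha₃ : ∀ s, a₃ s ≠ 0) :
    (∀ s, a₁ s = (τ s / κ s) * a₃ s) ∧
    ∃ n : ℝ, n ≠ 0 ∧ ∀ s,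
      a₃ s = n * κ s / Real.sqrt (κ s ^ 2 + τ s ^ 2) ∧
      a₁ s = n * τ s / Real.sqrt (κ s ^ 2 + τ s ^ 2) := by
  have hκ0 s : κ s ≠ 0 := (hκpos s).ne'
  have hrel s : a₁ s * κ s = a₃ s * τ s := by
    have : deriv a₂ s = 0 := by rw [funext ha₂, deriv_const]
    linarith [h2 s]
  obtain ⟨C, hC⟩ := hnorm
  set n : ℝ → ℝ := fun s => a₃ s * √(κ s ^ 2 + τ s ^ 2) / κ s
  have hn_ne s : n s ≠ 0 :=
    div_ne_zero (mul_ne_zero (ha₃ s) (sqrt_pos.2 (by have := hκ0 s; positivity)).ne') (hκ0 s)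
  have hn_const s : n s = n 0 := by
    refine eq_of_continuous_of_sq_eq_const (c := C - cos θ ^ 2) ?_ (fun s => ?_) hn_ne s 0
    · exact (ha₃d.continuous.mul ((hκ.continuous.pow 2).add (hτ.continuous.pow 2)).sqrt).div
        hκ.continuous hκ0
    · rw [sq_mul_sqrt_div_eq_sq_add_sq_of_mul_eq (hκ0 s) (hrel s), ← ha₂ s]
      linarith [hC s]
  refine ⟨fun s => ?_, n 0, hn_ne 0, fun s =>
    eq_mul_div_sqrt_of_mul_sqrt_div_eq (hκ0 s) (hrel s) (hn_const s)⟩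
  rw [div_mul_eq_mul_div, eq_div_iff (hκ0 s), mul_comm (τ s), hrel s]

theorem stmt_5 (κ τ a₁ a₂ a₃ : ℝ → ℝ) (θ : ℝ)
    (hκ : Differentiable ℝ κ) (hτ : Differentiable ℝ τ)
    (hκpos : ∀ s, 0 < κ s)
    (ha₁d : Differentiable ℝ a₁) (ha₂d : Differentiable ℝ a₂)
    (ha₃d : Differentiable ℝ a₃)
    (h1 : ∀ s, deriv a₁ s = a₂ s * κ s)
    (h2 : ∀ s, deriv a₂ s = -(a₁ s * κ s) + a₃ s * τ s)
    (h3 : ∀ s, deriv a₃ s = -(a₂ s * τ s))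
    (ha₂ : ∀ s, a₂ s = Real.cos θ) (hθ : Real.cos θ ≠ 0)
    (hnorm : ∃ C, ∀ s, a₁ s ^ 2 + a₂ s ^ 2 + a₃ s ^ 2 = C)
    (ha₃ : ∀ s, a₃ s ≠ 0) :
    (∀ s, a₁ s = (τ s / κ s) * a₃ s) ∧
    ∃ n : ℝ, n ≠ 0 ∧ ∀ s,
      a₃ s = n * κ s / Real.sqrt (κ s ^ 2 + τ s ^ 2) ∧
      a₁ s = n * τ s / Real.sqrt (κ s ^ 2 + τ s ^ 2) :=
  stmt_5_general κ τ a₁ a₂ a₃ θ hκ hτ hκpos ha₃d h2 ha₂ hnorm ha₃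
end

section
/- Let a₁, a₂, a₃, κ, τ : ℝ → ℝ be differentiable satisfying a₁' = a₂κ, a₂' = −a₁κ + a₃τ, a₃' = −a₂τ, with a₃ nowhere zero and τ' nowhere zero, and suppose a₁τ + a₃κ is constant. Then a₂' = a₃·(κ² + τ²)'/(2τ'). Consequently, a₂ is constant if and only if κ² + τ² is constant. -/
/-!
Differentiating the constant `a₁ τ + a₃ κ` along the Frenet-type system, the `a₂`-terms cancel
and leave `a₁ τ' + a₃ κ' = 0`. Multiplying `a₂' = -a₁ κ + a₃ τ` by `τ'` and substituting
`a₁ τ' = -a₃ κ'` gives `a₂' τ' = a₃ (κ κ' + τ τ') = a₃ (κ² + τ²)' / 2`. As `a₃` and `τ'` never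
vanish, `a₂'` and `(κ² + τ²)'` vanish at the same points, so one function is constant exactly when
the other is.
-/

theorem exists_forall_eq_iff_deriv_eq_zero {𝕜 G : Type*} [RCLike 𝕜] [NormedAddCommGroup G]
    [NormedSpace 𝕜 G] {f : 𝕜 → G} (hf : Differentiable 𝕜 f) :
    (∃ c, ∀ x, f x = c) ↔ ∀ x, deriv f x = 0 := by
  constructor
  · rintro ⟨c, hc⟩ x
    rw [funext hc, deriv_const]
  · exact fun hf' => ⟨f 0, fun x => is_const_of_deriv_eq_zero hf hf' x 0⟩

theorem deriv_sq_add_sq {f g : ℝ → ℝ} {x : ℝ} (hf : DifferentiableAt ℝ f x)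
    (hg : DifferentiableAt ℝ g x) :
    deriv (fun u => f u ^ 2 + g u ^ 2) x = 2 * (f x * deriv f x + g x * deriv g x) := by
  rw [deriv_fun_add (f := fun u => f u ^ 2) (g := fun u => g u ^ 2) (hf.pow 2) (hg.pow 2),
    deriv_fun_pow hf 2, deriv_fun_pow hg 2]
  ring

section Frenet

variable {a₁ a₂ a₃ κ τ : ℝ → ℝ}

theorem mul_deriv_add_mul_deriv_eq_zero_of_const (ha₁ : Differentiable ℝ a₁)
    (ha₃ : Differentiable ℝ a₃) (hκ : Differentiable ℝ κ) (hτ : Differentiable ℝ τ)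
    (h1 : ∀ s, deriv a₁ s = a₂ s * κ s) (h3 : ∀ s, deriv a₃ s = -(a₂ s * τ s))
    {C : ℝ} (hC : ∀ s, a₁ s * τ s + a₃ s * κ s = C) (s : ℝ) :
    a₁ s * deriv τ s + a₃ s * deriv κ s = 0 := by
  have hzero : deriv (fun s => a₁ s * τ s + a₃ s * κ s) s = 0 := by
    rw [funext hC, deriv_const]
  rw [deriv_fun_add (f := fun s => a₁ s * τ s) (g := fun s => a₃ s * κ s)
    ((ha₁ s).mul (hτ s)) ((ha₃ s).mul (hκ s)), deriv_fun_mul (ha₁ s) (hτ s),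
    deriv_fun_mul (ha₃ s) (hκ s), h1, h3] at hzero
  linear_combination hzero

theorem deriv_mul_deriv_eq {s : ℝ} (h2 : deriv a₂ s = -(a₁ s * κ s) + a₃ s * τ s)
    (hkey : a₁ s * deriv τ s + a₃ s * deriv κ s = 0) :
    deriv a₂ s * deriv τ s = a₃ s * (κ s * deriv κ s + τ s * deriv τ s) := by
  rw [h2]
  linear_combination (-κ s) * hkey

end Frenet

theorem stmt_9 (a₁ a₂ a₃ κ τ : ℝ → ℝ)
    (ha₁d : Differentiable ℝ a₁) (ha₂d : Differentiable ℝ a₂)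
    (ha₃d : Differentiable ℝ a₃)
    (hκ : Differentiable ℝ κ) (hτ : Differentiable ℝ τ)
    (h1 : ∀ s, deriv a₁ s = a₂ s * κ s)
    (h2 : ∀ s, deriv a₂ s = -(a₁ s * κ s) + a₃ s * τ s)
    (h3 : ∀ s, deriv a₃ s = -(a₂ s * τ s))
    (ha₃ : ∀ s, a₃ s ≠ 0) (hτ' : ∀ s, deriv τ s ≠ 0)
    (hconst : ∃ C, ∀ s, a₁ s * τ s + a₃ s * κ s = C) :
    (∀ s, deriv a₂ s =
      a₃ s * deriv (fun u => κ u ^ 2 + τ u ^ 2) s / (2 * deriv τ s)) ∧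
    ((∃ c, ∀ s, a₂ s = c) ↔ (∃ c, ∀ s, κ s ^ 2 + τ s ^ 2 = c)) := by
  obtain ⟨C, hC⟩ := hconst
  have hkey := mul_deriv_add_mul_deriv_eq_zero_of_const ha₁d ha₃d hκ hτ h1 h3 hC
  have hformula : ∀ s, deriv a₂ s =
      a₃ s * deriv (fun u => κ u ^ 2 + τ u ^ 2) s / (2 * deriv τ s) := by
    intro s
    rw [deriv_sq_add_sq (hκ s) (hτ s), eq_div_iff (mul_ne_zero two_ne_zero (hτ' s))]
    linear_combination 2 * deriv_mul_deriv_eq (h2 s) (hkey s)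
  refine ⟨hformula, ?_⟩
  rw [exists_forall_eq_iff_deriv_eq_zero ha₂d,
    exists_forall_eq_iff_deriv_eq_zero (f := fun u => κ u ^ 2 + τ u ^ 2) (by fun_prop)]
  refine forall_congr' fun s => ?_
  simp [hformula s, ha₃ s, hτ' s]
end

section
/- Suppose κ, τ : ℝ → ℝ satisfy κ(s) = w·sin(μs) and τ(s) = w·cos(μs) for constants w > 0 and μ (curve of constant precession). Then κ² + τ² = w² is constant, and conversely, if κ² + τ² is constant and the slant-helix invariant κ²(τ/κ)'/(κ²+τ²)^{3/2} is constant (with κ nowhere zero), then there exist constants w > 0 and μ such that κ and τ are of the above form up to a shift of parameter, i.e., (κ, τ) = (w sin(μs + c), w cos(μs + c)) for some constant c. -/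
/-!
Since `κ² + τ² = C` is constant, the point `(τ, κ)` moves on the circle of radius `√C`, and
`κ τ' - τ κ'` is its angular momentum. The invariant equals `(κ τ' - τ κ') / C^{3/2}`, so its
constancy makes the angular speed constant: `z = τ + iκ` solves `z' = iμz`, hence
`z(s) = z(0) e^{iμs} = √C e^{i(μs + arg z(0))}`.
-/

open Complex

theorem sq_add_sq_of_eq_mul_sin_of_eq_mul_cos {κ τ : ℝ → ℝ} {w μ : ℝ}
    (h : ∀ s, κ s = w * Real.sin (μ * s) ∧ τ s = w * Real.cos (μ * s)) (s : ℝ) :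
    κ s ^ 2 + τ s ^ 2 = w ^ 2 := by
  obtain ⟨hκ, hτ⟩ := h s
  rw [hκ, hτ]
  linear_combination w ^ 2 * Real.sin_sq_add_cos_sq (μ * s)

theorem eq_mul_cexp_of_hasDerivAt_mul {z : ℝ → ℂ} {a : ℂ}
    (hz : ∀ s, HasDerivAt z (a * z s) s) (s : ℝ) : z s = z 0 * exp (a * s) := by
  have hconst : ∀ t : ℝ, HasDerivAt (fun t : ℝ => z t * exp (-(a * t))) 0 t := by
    intro t
    have he : HasDerivAt (fun t : ℝ => exp (-(a * t))) (exp (-(a * t)) * -(a * 1)) t :=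
      ((hasDerivAt_id t).ofReal_comp.const_mul a).neg.cexp
    exact ((hz t).mul he).congr_deriv (by ring)
  have h := is_const_of_deriv_eq_zero (fun t => (hconst t).differentiableAt)
    (fun t => (hconst t).deriv) s 0
  simp only [ofReal_zero, mul_zero, neg_zero, exp_zero, mul_one] at h
  rw [← h, mul_assoc, ← exp_add, neg_add_cancel, exp_zero, mul_one]

theorem mul_deriv_add_mul_deriv_eq_zero {κ τ : ℝ → ℝ} {C : ℝ} (hκ : Differentiable ℝ κ)
    (hτ : Differentiable ℝ τ) (hC : ∀ s, κ s ^ 2 + τ s ^ 2 = C) (s : ℝ) :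
    κ s * deriv κ s + τ s * deriv τ s = 0 := by
  have hd := ((hκ s).hasDerivAt.pow 2).add ((hτ s).hasDerivAt.pow 2)
  rw [show κ ^ 2 + τ ^ 2 = fun _ => C from funext hC] at hd
  have h := (hasDerivAt_const s C).unique hd
  push_cast at h
  linear_combination -h / 2

theorem sq_mul_deriv_div {κ τ : ℝ → ℝ} {s : ℝ} (hκ : DifferentiableAt ℝ κ s)
    (hτ : DifferentiableAt ℝ τ s) (hκ0 : κ s ≠ 0) :
    κ s ^ 2 * deriv (fun u => τ u / κ u) s = κ s * deriv τ s - τ s * deriv κ s := by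
  rw [show (fun u => τ u / κ u) = τ / κ from rfl, deriv_div hτ hκ hκ0]
  field_simp

theorem deriv_eq_of_sq_add_sq_eq_of_wronskian_eq {κ τ κ' τ' C K : ℝ}
    (hC : κ ^ 2 + τ ^ 2 = C) (hC0 : C ≠ 0) (hsum : κ * κ' + τ * τ' = 0)
    (hK : κ * τ' - τ * κ' = K) : κ' = -(K / C) * τ ∧ τ' = K / C * κ := by
  constructor <;> field_simp
  · linear_combination -κ' * hC + κ * hsum - τ * hK
  · linear_combination -τ' * hC + τ * hsum + κ * hK

theorem exists_eq_mul_sin_and_eq_mul_cos_of_hasDerivAt {κ τ : ℝ → ℝ} {μ : ℝ}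
    (hκ : ∀ s, HasDerivAt κ (μ * τ s) s) (hτ : ∀ s, HasDerivAt τ (-(μ * κ s)) s) :
    ∃ c : ℝ, ∀ s, κ s = √(τ 0 ^ 2 + κ 0 ^ 2) * Real.sin (μ * s + c) ∧
      τ s = √(τ 0 ^ 2 + κ 0 ^ 2) * Real.cos (μ * s + c) := by
  set z : ℝ → ℂ := fun s => τ s + κ s * I with hz_def
  have hz : ∀ s, HasDerivAt z (μ * I * z s) s := fun s =>
    ((hτ s).ofReal_comp.add ((hκ s).ofReal_comp.mul_const I)).congr_deriv
      (by push_cast; linear_combination (-(μ : ℂ) * κ s) * I_sq)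
  refine ⟨(z 0).arg, fun s => ?_⟩
  have hpolar :
      z s = ((√(τ 0 ^ 2 + κ 0 ^ 2) : ℝ) : ℂ) * exp ((μ * s + (z 0).arg : ℝ) * I) := by
    have hz₀ : z 0 = ((√(τ 0 ^ 2 + κ 0 ^ 2) : ℝ) : ℂ) * exp ((z 0).arg * I) := by
      rw [← norm_add_mul_I]
      exact (norm_mul_exp_arg_mul_I _).symm
    conv_lhs => rw [eq_mul_cexp_of_hasDerivAt_mul hz s, hz₀, mul_assoc, ← exp_add]
    push_cast
    ring_nf
  rw [Complex.ext_iff] at hpolar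
  simp only [hz_def, add_re, add_im, ofReal_re, ofReal_im, mul_re, mul_im, I_re, I_im,
    exp_ofReal_mul_I_re, exp_ofReal_mul_I_im, mul_one, mul_zero, zero_mul, add_zero, zero_add,
    sub_zero] at hpolar
  exact ⟨hpolar.2, hpolar.1⟩

theorem stmt_11 (κ τ : ℝ → ℝ) :
    (∀ w : ℝ, 0 < w → ∀ μ : ℝ,
      (∀ s, κ s = w * Real.sin (μ * s) ∧ τ s = w * Real.cos (μ * s)) →
      ∀ s, κ s ^ 2 + τ s ^ 2 = w ^ 2) ∧
    ((Differentiable ℝ κ ∧ Differentiable ℝ τ ∧ (∀ s, κ s ≠ 0) ∧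
      (∃ C, ∀ s, κ s ^ 2 + τ s ^ 2 = C) ∧
      (∃ σ, ∀ s, κ s ^ 2 * deriv (fun u => τ u / κ u) s /
        (κ s ^ 2 + τ s ^ 2) ^ ((3 : ℝ) / 2) = σ)) →
      ∃ w : ℝ, 0 < w ∧ ∃ μ c : ℝ, ∀ s,
        κ s = w * Real.sin (μ * s + c) ∧ τ s = w * Real.cos (μ * s + c)) := by
  refine ⟨fun w _ μ h => sq_add_sq_of_eq_mul_sin_of_eq_mul_cos h, ?_⟩
  rintro ⟨hκ, hτ, hκ0, ⟨C, hC⟩, ⟨σ, hσ⟩⟩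
  have hC0 : 0 < C := hC 0 ▸ by have := hκ0 0; positivity
  have hwronskian : ∀ s, κ s * deriv τ s - τ s * deriv κ s = σ * C ^ ((3 : ℝ) / 2) := by
    intro s
    rw [← sq_mul_deriv_div (hκ s) (hτ s) (hκ0 s), ← hσ s, hC s,
      div_mul_cancel₀ _ (Real.rpow_pos_of_pos hC0 _).ne']
  have hrot := fun s => deriv_eq_of_sq_add_sq_eq_of_wronskian_eq (hC s) hC0.ne'
    (mul_deriv_add_mul_deriv_eq_zero hκ hτ hC s) (hwronskian s)
  obtain ⟨c, hc⟩ := exists_eq_mul_sin_and_eq_mul_cos_of_hasDerivAt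
    (μ := -(σ * C ^ ((3 : ℝ) / 2) / C))
    (fun s => (hrot s).1 ▸ (hκ s).hasDerivAt) (fun s => by
      simpa only [neg_mul, neg_neg, (hrot s).2] using (hτ s).hasDerivAt)
  rw [add_comm, hC 0] at hc
  exact ⟨√C, Real.sqrt_pos.2 hC0, _, c, hc⟩
end

section
/- Suppose κ, τ : ℝ → ℝ are differentiable, κ > 0, τ nowhere zero, and there are differentiable functions a₁, a₃ with a₁τ' + a₃κ' = 0 and a₁κ − a₃τ = 0 at every point, with a₃ nowhere zero. Then κκ' + ττ' = 0, i.e., κ² + τ² is constant. -/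
/-! Multiplying the first relation by `κ` and substituting `a₁ κ = a₃ τ` from the second gives
`a₃ (κ κ' + τ τ') = 0`; since `a₃` never vanishes, `(κ² + τ²)' = 2 (κ κ' + τ τ') = 0`. -/

theorem mul_add_mul_eq_zero_of_relations {a₁ a₃ k t k' t' : ℝ}
    (h1 : a₁ * t' + a₃ * k' = 0) (h2 : a₁ * k - a₃ * t = 0) (ha₃ : a₃ ≠ 0) :
    k * k' + t * t' = 0 := by
  have h : a₃ * (k * k' + t * t') = 0 := by linear_combination k * h1 - t' * h2
  exact (mul_eq_zero.mp h).resolve_left ha₃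

theorem exists_sq_add_sq_eq_of_mul_deriv_add_mul_deriv_eq_zero {f g : ℝ → ℝ}
    (hf : Differentiable ℝ f) (hg : Differentiable ℝ g)
    (h : ∀ s, f s * deriv f s + g s * deriv g s = 0) :
    ∃ C, ∀ s, f s ^ 2 + g s ^ 2 = C := by
  have hderiv : ∀ s, deriv (f ^ 2 + g ^ 2) s = 0 := fun s => by
    rw [(((hf s).hasDerivAt.pow 2).add ((hg s).hasDerivAt.pow 2)).deriv]
    linear_combination 2 * h s
  exact ⟨f 0 ^ 2 + g 0 ^ 2, fun s =>
    is_const_of_deriv_eq_zero ((hf.pow 2).add (hg.pow 2)) hderiv s 0⟩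

theorem stmt_17_general (κ τ a₁ a₃ : ℝ → ℝ)
    (hκ : Differentiable ℝ κ) (hτ : Differentiable ℝ τ)
    (h1 : ∀ s, a₁ s * deriv τ s + a₃ s * deriv κ s = 0)
    (h2 : ∀ s, a₁ s * κ s - a₃ s * τ s = 0)
    (ha₃ : ∀ s, a₃ s ≠ 0) :
    (∀ s, κ s * deriv κ s + τ s * deriv τ s = 0) ∧
    (∃ C, ∀ s, κ s ^ 2 + τ s ^ 2 = C) := by
  have hκτ : ∀ s, κ s * deriv κ s + τ s * deriv τ s = 0 := fun s =>
    mul_add_mul_eq_zero_of_relations (h1 s) (h2 s) (ha₃ s)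
  exact ⟨hκτ, exists_sq_add_sq_eq_of_mul_deriv_add_mul_deriv_eq_zero hκ hτ hκτ⟩

theorem stmt_17 (κ τ a₁ a₃ : ℝ → ℝ)
    (hκ : Differentiable ℝ κ) (hτ : Differentiable ℝ τ)
    (hκpos : ∀ s, 0 < κ s) (hτ0 : ∀ s, τ s ≠ 0)
    (h1 : ∀ s, a₁ s * deriv τ s + a₃ s * deriv κ s = 0)
    (h2 : ∀ s, a₁ s * κ s - a₃ s * τ s = 0)
    (ha₃ : ∀ s, a₃ s ≠ 0) :
    (∀ s, κ s * deriv κ s + τ s * deriv τ s = 0) ∧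
    (∃ C, ∀ s, κ s ^ 2 + τ s ^ 2 = C) :=
  stmt_17_general κ τ a₁ a₃ hκ hτ h1 h2 ha₃
end
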